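/- arXiv:0809.2082 — 3 statements merged into one kernel-verified Lean document; each statement's English description precedes it below -/
import Mathlib

section
/- Let (p_n)_{n≥1} be a sequence of integers with 0 ≤ p_n ≤ n−3 and limsup_{n→∞} p_n/n < 1/2. Then the mean spatial Betti number satisfies μ_n[b_{2p_n}(ℓ)] / ( ∑_{k=0}^{p_n} C(n−1,k) ) → 1 as n → ∞, where C(n−1,k) is the binomial coefficient. -/
open MeasureTheory Filter Finset

noncomputable section

/-- The i.i.d. product measure `μ^{⊗ n}` on `Fin n → ℝ`. -/
def pmeas (μ : MeasureTheory.Measure ℝ) (n : ℕ) : MeasureTheory.Measure (Fin n → ℝ) :=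
  MeasureTheory.Measure.pi fun _ => μ

/-- The minimal index (as a natural number) at which `ℓ` attains its maximum. -/
def maxIdx (n : ℕ) (ℓ : Fin n → ℝ) : ℕ :=
  sInf {i : ℕ | ∃ h : i < n, ∀ j : Fin n, ℓ j ≤ ℓ ⟨i, h⟩}

/-- The `i`-th coordinate of `ℓ` (`0`-based), with junk value `0` out of range. -/
def coord (n : ℕ) (ℓ : Fin n → ℝ) (i : ℕ) : ℝ :=
  if h : i < n then ℓ ⟨i, h⟩ else 0

/-- `a_p(ℓ)`: the number of short subsets of cardinality `p+1` containing the minimal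
index `i₀` of a maximal coordinate. -/
def aCount (n p : ℕ) (ℓ : Fin n → ℝ) : ℕ :=
  Nat.card {J : Finset (Fin n) //
    J.card = p + 1 ∧ (∃ i ∈ J, (i : ℕ) = maxIdx n ℓ) ∧
    ∑ j ∈ J, ℓ j < ∑ j ∈ Jᶜ, ℓ j}

/-- `ã_p(ℓ)`: the number of median subsets of cardinality `p+1` containing `i₀`. -/
def medCount (n p : ℕ) (ℓ : Fin n → ℝ) : ℕ :=
  Nat.card {J : Finset (Fin n) //
    J.card = p + 1 ∧ (∃ i ∈ J, (i : ℕ) = maxIdx n ℓ) ∧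
    ∑ j ∈ J, ℓ j = ∑ j ∈ Jᶜ, ℓ j}

/-- The `p`-th Betti number of the planar polygon space:
`b_p(ℓ) = a_p(ℓ) + ã_p(ℓ) + a_{n-3-p}(ℓ)`. -/
def bPlanar (n p : ℕ) (ℓ : Fin n → ℝ) : ℕ :=
  aCount n p ℓ + medCount n p ℓ + aCount n (n - 3 - p) ℓ

/-- `â_p(ℓ)`: the number of short subsets of cardinality `p+1` containing the last index. -/
def hatACount (n p : ℕ) (ℓ : Fin n → ℝ) : ℕ :=
  Nat.card {J : Finset (Fin n) //
    J.card = p + 1 ∧ (∃ i ∈ J, (i : ℕ) = n - 1) ∧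
    ∑ j ∈ J, ℓ j < ∑ j ∈ Jᶜ, ℓ j}

/-- The `2p`-th Betti number of the spatial polygon space:
`b_{2p}(ℓ) = ∑_{j=0}^p (â_j(ℓ) - â_{n-j-2}(ℓ))`. -/
def bSpatial (n p : ℕ) (ℓ : Fin n → ℝ) : ℝ :=
  ∑ j ∈ Finset.range (p + 1), ((hatACount n j ℓ : ℝ) - (hatACount n (n - j - 2) ℓ : ℝ))

/-- The Poincaré polynomial of the planar polygon space `M_ℓ`. -/
def poincareM (n : ℕ) (t : ℝ) (ℓ : Fin n → ℝ) : ℝ :=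
  ∑ p ∈ Finset.range (n - 2), (bPlanar n p ℓ : ℝ) * t ^ p

/-- The Poincaré polynomial of the spatial polygon space `N_ℓ`. -/
def poincareN (n : ℕ) (t : ℝ) (ℓ : Fin n → ℝ) : ℝ :=
  ∑ p ∈ Finset.range (n - 2), bSpatial n p ℓ * t ^ (2 * p)

/-- The stopping time `τ_σ(ℓ)`, for `σ` a permutation of `{1, …, n-1}`. -/
def tauPerm (n : ℕ) (σ : Equiv.Perm (Fin (n - 1))) (ℓ : Fin n → ℝ) : ℕ :=
  sInf {t : ℕ |
    0 ≤ coord n ℓ (n - 1) + ∑ i : Fin (n - 1),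
      (if (i : ℕ) < t then coord n ℓ ((σ i : ℕ)) else - coord n ℓ ((σ i : ℕ)))}

/-- `ℓ̃`: the vector obtained from `ℓ` by exchanging the coordinates at positions `i₀`
(the minimal index of a maximal coordinate) and `n`. -/
def tildeVec (n : ℕ) (ℓ : Fin n → ℝ) : Fin n → ℝ := fun j =>
  if (j : ℕ) = maxIdx n ℓ then coord n ℓ (n - 1)
  else if (j : ℕ) = n - 1 then coord n ℓ (maxIdx n ℓ)
  else ℓ j

/-- `τ(ℓ) = τ_id(ℓ)`. -/
def tau (n : ℕ) (ℓ : Fin n → ℝ) : ℕ := tauPerm n (Equiv.refl _) ℓ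

/-- `τ̃(ℓ) = τ_id(ℓ̃)`. -/
def tauTilde (n : ℕ) (ℓ : Fin n → ℝ) : ℕ := tau n (tildeVec n ℓ)

/-!
Write `D_n = ∑_{k ≤ p_n} C(n-1, k)`. By linearity, `μ_n[â_j]` is the sum, over the `C(n-1, j)`
sets `J ∋ n` with `|J| = j + 1`, of the probability that `J` is short. A Chernoff bound shows that
for `β > 1/2` there is `ρ < 1` such that any `K` with `|K| ≥ βn` satisfies
`∑_K l ≤ ∑_{Kᶜ} l` with probability at most `ρⁿ`: the exponent `β·cgf(-t) + (1-β)·cgf(t)` vanishes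
at `t = 0` with slope `(1 - 2β)·m < 0`. Eventually `p_n + 1 ≤ αn` with `α = 1 - β < 1/2`, and then
for `j ≤ p_n` both the complement of a set counted by `â_j` and a set counted by `â_{n-j-2}` are
that large. Hence `μ_n[â_j] ≥ C(n-1, j)(1 - ρⁿ)` and
`μ_n[â_{n-j-2}] ≤ C(n-1, j+1) ρⁿ ≤ n C(n-1, j) ρⁿ`, so that
`D_n (1 - (n+1)ρⁿ) ≤ μ_n[b_{2p_n}] ≤ D_n`.
-/

open MeasureTheory ProbabilityTheory Filter Finset Topology Real

lemma Nat.choose_succ_le_succ_mul (m k : ℕ) : m.choose (k + 1) ≤ (m + 1) * m.choose k := by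
  rw [Nat.add_one_mul_choose_eq]
  exact (Nat.choose_le_choose _ m.le_succ).trans (Nat.le_mul_of_pos_right _ k.succ_pos)

lemma exp_pow_mul_exp_pow_le {a b β : ℝ} (hab : a ≤ b) {k l : ℕ} (hk : β * (k + l) ≤ k) :
    exp a ^ k * exp b ^ l ≤ exp (β * a + (1 - β) * b) ^ (k + l) := by
  simp only [← exp_nat_mul, ← exp_add, exp_le_exp]
  push_cast
  nlinarith

lemma MeasureTheory.integral_pos_of_ae_pos {α : Type*} {mα : MeasurableSpace α} {μ : Measure α}
    [NeZero μ] {f : α → ℝ} (hf : ∀ᵐ x ∂μ, 0 < f x) (hint : Integrable f μ) :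
    0 < ∫ x, f x ∂μ := by
  rw [integral_pos_iff_support_of_nonneg_ae (hf.mono fun _ h => h.le) hint, pos_iff_ne_zero]
  intro h0
  obtain ⟨x, hx, hx0⟩ := (hf.and (measure_eq_zero_iff_ae_notMem.mp h0)).exists
  exact hx0 hx.ne'

namespace ProbabilityTheory

variable {Ω : Type*} {mΩ : MeasurableSpace Ω} {μ : Measure Ω} [IsProbabilityMeasure μ]
  {X : Ω → ℝ}

lemma hasDerivAt_cgf_zero (h : 0 ∈ interior (integrableExpSet X μ)) :
    HasDerivAt (cgf X μ) μ[X] 0 := by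
  simpa [deriv_cgf_zero h] using (analyticAt_cgf h).differentiableAt.hasDerivAt

lemma eventually_cgf_neg_combination_lt_zero (h : 0 ∈ interior (integrableExpSet X μ))
    (hX : 0 < μ[X]) {β : ℝ} (hβ : 1 / 2 < β) :
    ∀ᶠ t in 𝓝[>] 0, β * cgf X μ (-t) + (1 - β) * cgf X μ t < 0 := by
  have hneg : HasDerivAt (fun t => cgf X μ (-t)) (-μ[X]) 0 := by
    have h' : HasDerivAt (cgf X μ) μ[X] (-0) := by rw [neg_zero]; exact hasDerivAt_cgf_zero h
    simpa [Function.comp_def] using h'.comp (0 : ℝ) (hasDerivAt_neg (0 : ℝ))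
  have hψ := (hneg.const_mul β).add ((hasDerivAt_cgf_zero h).const_mul (1 - β))
  filter_upwards [(hψ.hasDerivWithinAt (s := Set.Ioi 0)).limsup_slope_le' (lt_irrefl (0 : ℝ))
    (by nlinarith : β * -μ[X] + (1 - β) * μ[X] < 0), self_mem_nhdsWithin] with t ht ht0
  rw [slope_def_field] at ht
  simpa [cgf_zero, div_neg_iff, ht0.out, not_lt_of_gt ht0.out] using ht

lemma cgf_neg_le_cgf (hX : 0 ≤ᵐ[μ] X) {t : ℝ} (ht : 0 ≤ t)
    (hneg : Integrable (fun ω => exp (-t * X ω)) μ)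
    (hpos : Integrable (fun ω => exp (t * X ω)) μ) : cgf X μ (-t) ≤ cgf X μ t := by
  refine log_le_log (mgf_pos hneg) ?_
  rw [← mgf_neg]
  refine mgf_mono_of_nonneg ?_ ht hpos
  filter_upwards [hX] with ω hω
  simp only [Pi.neg_apply, Pi.zero_apply] at hω ⊢
  linarith

end ProbabilityTheory

lemma measureReal_sum_le_sum_compl_le_mgf {ι : Type*} [Fintype ι] [DecidableEq ι]
    (μ : Measure ℝ) [IsProbabilityMeasure μ] (K : Finset ι) {t : ℝ} (ht : 0 ≤ t)
    (hneg : Integrable (fun x => exp (-t * x)) μ) (hpos : Integrable (fun x => exp (t * x)) μ) :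
    (Measure.pi fun _ : ι => μ).real {ℓ | ∑ i ∈ K, ℓ i ≤ ∑ i ∈ Kᶜ, ℓ i} ≤
      mgf id μ (-t) ^ #K * mgf id μ t ^ #Kᶜ := by
  set f : ι → ℝ → ℝ := fun i x => exp ((if i ∈ K then -t else t) * x)
  have hf : ∀ ℓ : ι → ℝ, exp (t * (∑ i ∈ Kᶜ, ℓ i - ∑ i ∈ K, ℓ i)) = ∏ i, f i (ℓ i) := by
    intro ℓ
    simp only [f, ← exp_sum, ite_mul, sum_ite, ← compl_filter, filter_univ_mem, ← mul_sum]
    ring_nf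
  have hint : Integrable (fun ℓ : ι → ℝ => exp (t * (∑ i ∈ Kᶜ, ℓ i - ∑ i ∈ K, ℓ i)))
      (Measure.pi fun _ : ι => μ) := by
    simp_rw [hf]
    refine Integrable.fintype_prod fun i => ?_
    by_cases hi : i ∈ K
    · simpa [f, hi] using hneg
    · simpa [f, hi] using hpos
  calc _ = (Measure.pi fun _ : ι => μ).real {ℓ | 0 ≤ ∑ i ∈ Kᶜ, ℓ i - ∑ i ∈ K, ℓ i} := by
        simp_rw [sub_nonneg]
    _ ≤ exp (-t * 0) * mgf (fun ℓ : ι → ℝ => ∑ i ∈ Kᶜ, ℓ i - ∑ i ∈ K, ℓ i)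
          (Measure.pi fun _ : ι => μ) t := measure_ge_le_exp_mul_mgf 0 ht hint
    _ = ∏ i, ∫ x, f i x ∂μ := by
        simp_rw [mul_zero, exp_zero, one_mul, mgf, hf]
        exact integral_fintype_prod_eq_prod f
    _ = ∏ i, if i ∈ K then mgf id μ (-t) else mgf id μ t := by
        refine prod_congr rfl fun i _ => ?_
        split_ifs <;> simp [f, mgf, *]
    _ = mgf id μ (-t) ^ #K * mgf id μ t ^ #Kᶜ := by
        simp [prod_ite, ← compl_filter]

lemma integrable_exp_mul_of_le {μ : Measure ℝ} (hμ : ∀ᵐ x ∂μ, 0 ≤ x) {s u : ℝ}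
    (hu : Integrable (fun x => exp (u * x)) μ) (hs : s ≤ u) :
    Integrable (fun x => exp (s * x)) μ := by
  refine hu.mono' (by fun_prop : Measurable fun x : ℝ => exp (s * x)).aestronglyMeasurable ?_
  filter_upwards [hμ] with x hx
  rw [norm_of_nonneg (exp_pos _).le]
  exact exp_le_exp.mpr (mul_le_mul_of_nonneg_right hs hx)

instance (μ : Measure ℝ) [IsProbabilityMeasure μ] (n : ℕ) :
    IsProbabilityMeasure (pmeas μ n) := by
  unfold pmeas; infer_instance

lemma exists_rate_measureReal_sum_le_sum_compl_le (μ : Measure ℝ) [IsProbabilityMeasure μ]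
    (hμ : ∀ᵐ x ∂μ, 0 < x) {η : ℝ} (hη : 0 < η)
    (hint : Integrable (fun x => exp (η * x)) μ) {β : ℝ} (hβ : 1 / 2 < β) :
    ∃ ρ, 0 < ρ ∧ ρ < 1 ∧ ∀ (n : ℕ) (K : Finset (Fin n)), β * n ≤ #K →
      (pmeas μ n).real {ℓ | ∑ i ∈ K, ℓ i ≤ ∑ i ∈ Kᶜ, ℓ i} ≤ ρ ^ n := by
  have hμ' : ∀ᵐ x ∂μ, 0 ≤ x := hμ.mono fun _ h => h.le
  have hexp : ∀ s ≤ η, Integrable (fun x => exp (s * x)) μ := fun s hs =>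
    integrable_exp_mul_of_le hμ' hint hs
  have h0 : 0 ∈ interior (integrableExpSet id μ) := mem_interior_iff_mem_nhds.mpr <|
    mem_of_superset (Iio_mem_nhds hη) fun s hs => hexp s (le_of_lt hs)
  have hmean : 0 < μ[id] :=
    integral_pos_of_ae_pos hμ (integrable_of_mem_interior_integrableExpSet h0)
  obtain ⟨t, hneg, ht⟩ := ((eventually_cgf_neg_combination_lt_zero h0 hmean hβ).and
    (Ioo_mem_nhdsGT hη)).exists
  refine ⟨exp (β * cgf id μ (-t) + (1 - β) * cgf id μ t), exp_pos _, exp_lt_one_iff.mpr hneg,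
    fun n K hK => ?_⟩
  have hint_neg := hexp (-t) (by linarith [ht.1])
  have hint_pos := hexp t ht.2.le
  have hcard : (#K : ℝ) + #Kᶜ = n := by
    exact_mod_cast (card_add_card_compl K).trans (Fintype.card_fin n)
  calc _ ≤ mgf id μ (-t) ^ #K * mgf id μ t ^ #Kᶜ :=
        measureReal_sum_le_sum_compl_le_mgf μ K ht.1.le hint_neg hint_pos
    _ = exp (cgf id μ (-t)) ^ #K * exp (cgf id μ t) ^ #Kᶜ := by
        rw [exp_cgf (X := id) hint_neg, exp_cgf (X := id) hint_pos]
    _ ≤ exp (β * cgf id μ (-t) + (1 - β) * cgf id μ t) ^ (#K + #Kᶜ) :=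
        exp_pow_mul_exp_pow_le (cgf_neg_le_cgf hμ' ht.1.le hint_neg hint_pos)
          (by rw [hcard]; exact hK)
    _ = _ := by rw [card_add_card_compl, Fintype.card_fin]

def lastSubsets (n p : ℕ) : Finset (Finset (Fin n)) :=
  {J | #J = p + 1 ∧ ∃ i ∈ J, (i : ℕ) = n - 1}

def shortSet (n : ℕ) (J : Finset (Fin n)) : Set (Fin n → ℝ) :=
  {ℓ | ∑ j ∈ J, ℓ j < ∑ j ∈ Jᶜ, ℓ j}

lemma card_lastSubsets {n : ℕ} (hn : 1 ≤ n) (p : ℕ) :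
    #(lastSubsets n p) = (n - 1).choose p := by
  set a : Fin n := ⟨n - 1, by omega⟩
  have hmem : ∀ J, J ∈ lastSubsets n p ↔ #J = p + 1 ∧ a ∈ J := fun J => by
    simp only [lastSubsets, mem_filter, mem_univ, true_and]
    exact and_congr_right fun _ =>
      ⟨fun ⟨i, hi, hia⟩ => (Fin.ext hia : i = a) ▸ hi, fun h => ⟨a, h, rfl⟩⟩
  calc #(lastSubsets n p) = #((univ.erase a).powersetCard p) := by
        refine card_nbij' (·.erase a) (insert a) ?_ ?_ ?_ ?_ <;> intro J hJ <;>
          simp only [mem_coe, hmem, mem_powersetCard, subset_erase] at hJ ⊢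
        · simp [card_erase_of_mem hJ.2, hJ.1]
        · simp [card_insert_of_notMem hJ.1.2, hJ.2]
        · exact insert_erase hJ.2
        · exact erase_insert hJ.1.2
    _ = (n - 1).choose p := by simp

lemma hatACount_eq_sum_indicator (n p : ℕ) (ℓ : Fin n → ℝ) :
    (hatACount n p ℓ : ℝ) = ∑ J ∈ lastSubsets n p, (shortSet n J).indicator 1 ℓ := by
  classical
  have hcard : hatACount n p ℓ = #{J ∈ lastSubsets n p | ℓ ∈ shortSet n J} := by
    rw [hatACount, Nat.card_eq_fintype_card, Fintype.card_subtype, lastSubsets, filter_filter]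
    simp only [shortSet, Set.mem_ofPred_eq, and_assoc]
  simp [hcard, Set.indicator_apply]

lemma measurableSet_shortSet (n : ℕ) (J : Finset (Fin n)) : MeasurableSet (shortSet n J) :=
  measurableSet_lt (by fun_prop) (by fun_prop)

section IntegralBetti

variable {n : ℕ} (ν : Measure (Fin n → ℝ))

lemma integral_hatACount [IsFiniteMeasure ν] (p : ℕ) :
    ∫ ℓ, (hatACount n p ℓ : ℝ) ∂ν = ∑ J ∈ lastSubsets n p, ν.real (shortSet n J) := by
  simp_rw [hatACount_eq_sum_indicator]
  rw [integral_finsetSum _ fun J _ =>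
    (integrable_const 1).indicator (measurableSet_shortSet n J)]
  exact sum_congr rfl fun J _ => integral_indicator_one (measurableSet_shortSet n J)

lemma integrable_hatACount [IsFiniteMeasure ν] (p : ℕ) :
    Integrable (fun ℓ => (hatACount n p ℓ : ℝ)) ν := by
  simp_rw [hatACount_eq_sum_indicator]
  exact integrable_finsetSum _ fun J _ =>
    (integrable_const 1).indicator (measurableSet_shortSet n J)

lemma integral_bSpatial [IsFiniteMeasure ν] (p : ℕ) :
    ∫ ℓ, bSpatial n p ℓ ∂ν = ∑ j ∈ range (p + 1),
      (∑ J ∈ lastSubsets n j, ν.real (shortSet n J) -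
        ∑ J ∈ lastSubsets n (n - j - 2), ν.real (shortSet n J)) := by
  unfold bSpatial
  rw [integral_finsetSum]
  · refine sum_congr rfl fun j _ => ?_
    rw [integral_sub (integrable_hatACount ν j) (integrable_hatACount ν (n - j - 2)),
      integral_hatACount, integral_hatACount]
  · exact fun j _ => (integrable_hatACount ν j).sub (integrable_hatACount ν (n - j - 2))

variable [IsProbabilityMeasure ν]

lemma integral_bSpatial_le (hn : 1 ≤ n) (p : ℕ) :
    ∫ ℓ, bSpatial n p ℓ ∂ν ≤ ∑ k ∈ range (p + 1), ((n - 1).choose k : ℝ) := by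
  rw [integral_bSpatial]
  refine sum_le_sum fun j _ => ?_
  have hle : ∑ J ∈ lastSubsets n j, ν.real (shortSet n J) ≤ ((n - 1).choose j : ℝ) := by
    simpa [card_lastSubsets hn] using
      sum_le_card_nsmul (lastSubsets n j) _ 1 fun J _ => measureReal_le_one
  linarith [sum_nonneg fun J (_ : J ∈ lastSubsets n (n - j - 2)) => measureReal_nonneg
    (μ := ν) (s := shortSet n J)]

lemma le_sum_lastSubsets_sub_sum_lastSubsets {j : ℕ} (hj : j + 2 ≤ n) {ε : ℝ}
    (htail : ∀ K : Finset (Fin n), n - (j + 1) ≤ #K →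
      ν.real {ℓ | ∑ i ∈ K, ℓ i ≤ ∑ i ∈ Kᶜ, ℓ i} ≤ ε) :
    ((n - 1).choose j : ℝ) * (1 - (n + 1) * ε) ≤
      ∑ J ∈ lastSubsets n j, ν.real (shortSet n J) -
        ∑ J ∈ lastSubsets n (n - j - 2), ν.real (shortSet n J) := by
  have hε : 0 ≤ ε := measureReal_nonneg.trans (htail univ (by simp))
  have hcard : ∀ {k J}, J ∈ lastSubsets n k → #J = k + 1 := fun hJ => (mem_filter.mp hJ).2.1
  have hlow : ∀ J ∈ lastSubsets n j, 1 - ε ≤ ν.real (shortSet n J) := by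
    intro J hJ
    have hc : (shortSet n J)ᶜ = {ℓ | ∑ i ∈ Jᶜ, ℓ i ≤ ∑ i ∈ Jᶜᶜ, ℓ i} := by
      ext ℓ; simp [shortSet]
    have := htail Jᶜ (by rw [card_compl, Fintype.card_fin, hcard hJ])
    rw [← hc, probReal_compl_eq_one_sub (measurableSet_shortSet n J)] at this
    linarith
  have hup : ∀ J ∈ lastSubsets n (n - j - 2), ν.real (shortSet n J) ≤ ε := by
    intro J hJ
    have hsub : shortSet n J ⊆ {ℓ | ∑ i ∈ J, ℓ i ≤ ∑ i ∈ Jᶜ, ℓ i} := fun _ hℓ =>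
      le_of_lt (α := ℝ) hℓ
    exact (measureReal_mono hsub).trans (htail J (by rw [hcard hJ]; omega))
  have hchoose : ((n - 1).choose (n - j - 2) : ℝ) ≤ n * (n - 1).choose j := by
    rw [show n - j - 2 = (n - 1) - (j + 1) by omega, Nat.choose_symm (by omega)]
    have h := Nat.choose_succ_le_succ_mul (n - 1) j
    rw [Nat.sub_add_cancel (by omega)] at h
    exact_mod_cast h
  have h1 := card_nsmul_le_sum _ _ _ hlow
  have h2 := sum_le_card_nsmul _ _ _ hup
  rw [card_lastSubsets (by omega), nsmul_eq_mul] at h1 h2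
  nlinarith

lemma le_integral_bSpatial {p : ℕ} (hp : p + 2 ≤ n) {ε : ℝ}
    (htail : ∀ K : Finset (Fin n), n - (p + 1) ≤ #K →
      ν.real {ℓ | ∑ i ∈ K, ℓ i ≤ ∑ i ∈ Kᶜ, ℓ i} ≤ ε) :
    (∑ k ∈ range (p + 1), ((n - 1).choose k : ℝ)) * (1 - (n + 1) * ε) ≤
      ∫ ℓ, bSpatial n p ℓ ∂ν := by
  rw [integral_bSpatial, sum_mul]
  refine sum_le_sum fun j hj => ?_
  have hjp : j ≤ p := Nat.lt_succ_iff.mp (mem_range.mp hj)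
  exact le_sum_lastSubsets_sub_sum_lastSubsets ν (by omega) fun K hK => htail K (by omega)

end IntegralBetti

lemma eventually_add_one_le_mul_of_limsup_lt {u : ℕ → ℝ}
    (hu : IsBoundedUnder (· ≤ ·) atTop fun n => u n / n) {α : ℝ}
    (hα : limsup (fun n => u n / n) atTop < α) : ∀ᶠ n : ℕ in atTop, u n + 1 ≤ α * n := by
  obtain ⟨α', hα', hα'α⟩ := exists_between hα
  have hgap : Tendsto (fun n : ℕ => (α - α') * n) atTop atTop :=
    tendsto_natCast_atTop_atTop.const_mul_atTop (sub_pos.mpr hα'α)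
  filter_upwards [eventually_lt_of_limsup_lt hα' hu, hgap.eventually_ge_atTop 1,
    eventually_gt_atTop 0] with n hn hgapn hn0
  rw [div_lt_iff₀ (by exact_mod_cast hn0)] at hn
  linarith

lemma tendsto_one_sub_add_one_mul_pow {ρ : ℝ} (hρ0 : 0 ≤ ρ) (hρ1 : ρ < 1) :
    Tendsto (fun n : ℕ => 1 - (n + 1) * ρ ^ n) atTop (𝓝 1) := by
  simpa [add_mul] using tendsto_const_nhds.sub
    ((tendsto_self_mul_const_pow_of_lt_one hρ0 hρ1).add
      (tendsto_pow_atTop_nhds_zero_of_lt_one hρ0 hρ1))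

theorem stmt4_general (μ : MeasureTheory.Measure ℝ) [IsProbabilityMeasure μ]
    (hsupp : μ (Set.Ioi (0 : ℝ))ᶜ = 0)
    (hexp : ∃ η > 0, Integrable (fun x => Real.exp (η * x)) μ)
    (p : ℕ → ℕ) (hp : ∀ n, 3 ≤ n → p n ≤ n - 3)
    (hlim : limsup (fun n => (p n : ℝ) / n) atTop < 1 / 2) :
    Tendsto (fun n => (∫ ℓ, bSpatial n (p n) ℓ ∂(pmeas μ n)) /
      (∑ k ∈ Finset.range (p n + 1), (Nat.choose (n - 1) k : ℝ))) atTop (nhds 1) := by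
  obtain ⟨η, hη, hint⟩ := hexp
  obtain ⟨α, hLα, hα⟩ := exists_between hlim
  obtain ⟨ρ, hρ0, hρ1, hρ⟩ := exists_rate_measureReal_sum_le_sum_compl_le μ
    (mem_ae_iff.mpr hsupp) hη hint (by linarith : 1 / 2 < 1 - α)
  have hbdd : IsBoundedUnder (· ≤ ·) atTop fun n => (p n : ℝ) / n := by
    refine isBoundedUnder_of_eventually_le (a := 1) ?_
    filter_upwards [eventually_ge_atTop 3] with n hn
    exact div_le_one_of_le₀ (by exact_mod_cast (hp n hn).trans (Nat.sub_le n 3)) n.cast_nonneg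
  have hD : ∀ n, 0 < ∑ k ∈ range (p n + 1), ((n - 1).choose k : ℝ) := fun n =>
    sum_pos' (fun k _ => by positivity) ⟨0, by simp⟩
  refine tendsto_of_tendsto_of_tendsto_of_le_of_le' (tendsto_one_sub_add_one_mul_pow hρ0.le hρ1)
    tendsto_const_nhds ?_ ?_
  · filter_upwards [eventually_add_one_le_mul_of_limsup_lt hbdd hLα] with n hn
    have hpn : p n + 2 ≤ n := by
      have : (p n : ℝ) + 2 ≤ n := by nlinarith [(n.cast_nonneg : (0 : ℝ) ≤ n)]
      exact_mod_cast this
    rw [le_div_iff₀ (hD n), mul_comm]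
    refine le_integral_bSpatial _ hpn fun K hK => hρ n K ?_
    have : ((n - (p n + 1) : ℕ) : ℝ) ≤ #K := by exact_mod_cast hK
    push_cast [Nat.cast_sub (by omega : p n + 1 ≤ n)] at this
    linarith
  · filter_upwards [eventually_ge_atTop 1] with n hn
    exact div_le_one_of_le₀ (integral_bSpatial_le _ hn _) (hD n).le

/-- If `(p_n)` is a sequence of integers with `0 ≤ p_n ≤ n-3` and
`limsup pₙ/n < 1/2`, then `μ_n[b_{2p_n}(ℓ)] / (∑_{k=0}^{p_n} C(n-1,k)) → 1`. -/
theorem stmt4 (μ : MeasureTheory.Measure ℝ) [IsProbabilityMeasure μ] [NullSingletonClass μ]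
    (hsupp : μ (Set.Ioi (0 : ℝ))ᶜ = 0)
    (hexp : ∃ η > 0, Integrable (fun x => Real.exp (η * x)) μ)
    (p : ℕ → ℕ) (hp : ∀ n, 3 ≤ n → p n ≤ n - 3)
    (hlim : limsup (fun n => (p n : ℝ) / n) atTop < 1 / 2) :
    Tendsto (fun n => (∫ ℓ, bSpatial n (p n) ℓ ∂(pmeas μ n)) /
      (∑ k ∈ Finset.range (p n + 1), (Nat.choose (n - 1) k : ℝ))) atTop (nhds 1) :=
  stmt4_general μ hsupp hexp p hp hlim
end
end

section
/- For every t > 0 with t ≠ 1, the mean Poincaré polynomial of the planar polygon space satisfies μ_n[p_{M_ℓ}(t)] / (1+t)^{n−1} → min(1, t^{−2}) as n → ∞. In particular, μ_n[p_{M_ℓ}(t)] ∼ (1+t)^{n−1} for 0 < t < 1 and μ_n[p_{M_ℓ}(t)] ∼ (1+t)^{n−1} t^{−2} for t > 1. -/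
open MeasureTheory Filter Finset

noncomputable section

/-!
Of the `C(n-1, p)` subsets of size `p + 1` containing `i₀`, those that are not short are non-short
subsets of size `p + 1`, and complements of short or median subsets are non-short. Hence `b_p(ℓ)`
differs from `C(n-1, p)` by at most the number of non-short subsets of sizes `p + 1` and `p + 2`,
and from `C(n-1, n-3-p)` by at most the number of those of sizes `n - 2 - p` and `n - 1 - p`.

A fixed `J` is non-short when `∑_{j ∈ J} ℓ_j - ∑_{j ∉ J} ℓ_j ≥ 0`, so by the Chernoff bound its
probability is at most `φ(λ)^|J| φ(-λ)^(n-|J|)`, where `φ` is the moment generating function of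
`μ`. Summed against `t^p`, the expected error is `O((t φ(λ) + φ(-λ))^n)` in the first comparison
and `O((t φ(-λ) + φ(λ))^n)` in the second. Since `φ'(0) = m > 0`, a small `λ > 0` gives
`a φ(λ) + b φ(-λ) < a + b` for any `a < b`, so the first error is negligible against
`(1 + t)^(n-1)` when `t < 1` and the second when `t > 1`. The main terms are binomial sums:
`∑_{p < n-2} C(n-1, p) t^p ~ (1 + t)^(n-1)` and, reflecting `p ↦ n - 3 - p`,
`∑_{p < n-2} C(n-1, n-3-p) t^p ~ (1 + t)^(n-1) / t²`.
-/

section Counting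

variable {n : ℕ}

def nonShortCount (n k : ℕ) (ℓ : Fin n → ℝ) : ℕ :=
  Nat.card {J : Finset (Fin n) // J.card = k ∧ ∑ j ∈ Jᶜ, ℓ j ≤ ∑ j ∈ J, ℓ j}

lemma exists_forall_le_coord (hn : 0 < n) (ℓ : Fin n → ℝ) :
    ∃ i, ∃ h : i < n, ∀ j : Fin n, ℓ j ≤ ℓ ⟨i, h⟩ := by
  obtain ⟨i, -, hi⟩ := exists_max_image univ ℓ ⟨⟨0, hn⟩, mem_univ _⟩
  exact ⟨i, i.isLt, fun j => hi j (mem_univ j)⟩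

lemma maxIdx_lt (hn : 0 < n) (ℓ : Fin n → ℝ) : maxIdx n ℓ < n := by
  obtain ⟨h, -⟩ := Nat.sInf_mem (s := {i : ℕ | ∃ h : i < n, ∀ j : Fin n, ℓ j ≤ ℓ ⟨i, h⟩})
    (exists_forall_le_coord hn ℓ)
  exact h

lemma exists_mem_val_eq_iff {k : ℕ} (hk : k < n) (J : Finset (Fin n)) :
    (∃ i ∈ J, (i : ℕ) = k) ↔ ⟨k, hk⟩ ∈ J :=
  ⟨fun ⟨i, hi, h⟩ => (Fin.ext h : i = ⟨k, hk⟩) ▸ hi, fun h => ⟨_, h, rfl⟩⟩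

open Classical in
lemma card_filter_card_eq_and_mem (i : Fin n) (q : ℕ) :
    #{J : Finset (Fin n) | J.card = q + 1 ∧ i ∈ J} = (n - 1).choose q := by
  have h := card_filter_powersetCard_subset {i} univ (q + 1) (subset_univ _) (by simp)
  simp only [card_singleton, card_univ, Fintype.card_fin, add_tsub_cancel_right,
    singleton_subset_iff, powersetCard_eq_filter, powerset_univ, filter_filter] at h
  exact h

section MaxIdx

variable (hn : 0 < n) (q : ℕ) (ℓ : Fin n → ℝ)
include hn

open Classical in
lemma aCount_eq_card_filter :
    aCount n q ℓ = #{J : Finset (Fin n) | J.card = q + 1 ∧ ⟨maxIdx n ℓ, maxIdx_lt hn ℓ⟩ ∈ J ∧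
      ∑ j ∈ J, ℓ j < ∑ j ∈ Jᶜ, ℓ j} := by
  simp only [aCount, Nat.card_eq_fintype_card, Fintype.card_subtype,
    exists_mem_val_eq_iff (maxIdx_lt hn ℓ)]

open Classical in
lemma aCount_add_medCount_eq_card_filter :
    aCount n q ℓ + medCount n q ℓ = #{J : Finset (Fin n) | J.card = q + 1 ∧
      ⟨maxIdx n ℓ, maxIdx_lt hn ℓ⟩ ∈ J ∧ ∑ j ∈ J, ℓ j ≤ ∑ j ∈ Jᶜ, ℓ j} := by
  simp only [aCount, medCount, Nat.card_eq_fintype_card, Fintype.card_subtype,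
    exists_mem_val_eq_iff (maxIdx_lt hn ℓ)]
  rw [← card_union_of_disjoint (disjoint_filter.2 fun J _ h₁ h₂ => h₁.2.2.ne h₂.2.2),
    ← filter_or]
  simp only [le_iff_lt_or_eq, and_or_left]

lemma aCount_add_medCount_le_choose : aCount n q ℓ + medCount n q ℓ ≤ (n - 1).choose q := by
  classical
  rw [aCount_add_medCount_eq_card_filter hn, ← card_filter_card_eq_and_mem _ q]
  exact card_le_card fun J => by simp only [mem_filter]; tauto

lemma choose_le_aCount_add_nonShortCount :
    (n - 1).choose q ≤ aCount n q ℓ + nonShortCount n (q + 1) ℓ := by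
  classical
  rw [← card_filter_card_eq_and_mem ⟨maxIdx n ℓ, maxIdx_lt hn ℓ⟩ q, aCount_eq_card_filter hn,
    nonShortCount, Nat.card_eq_fintype_card, Fintype.card_subtype,
    ← card_filter_add_card_filter_not (fun J : Finset (Fin n) => ∑ j ∈ J, ℓ j < ∑ j ∈ Jᶜ, ℓ j),
    filter_filter, filter_filter]
  refine add_le_add (le_of_eq (by simp only [and_assoc])) (card_le_card fun J => ?_)
  simp only [mem_filter, not_lt]
  tauto

lemma aCount_add_medCount_le_nonShortCount :
    aCount n q ℓ + medCount n q ℓ ≤ nonShortCount n (n - (q + 1)) ℓ := by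
  classical
  rw [aCount_add_medCount_eq_card_filter hn, nonShortCount, Nat.card_eq_fintype_card,
    Fintype.card_subtype]
  refine card_le_card_of_injOn compl (fun J hJ => ?_) compl_injective.injOn
  simp only [coe_filter, Set.mem_ofPred_eq, mem_univ, true_and] at hJ ⊢
  rw [card_compl, Fintype.card_fin, hJ.1, compl_compl]
  exact ⟨rfl, hJ.2.2⟩

end MaxIdx

variable {p : ℕ} (hp : p + 3 ≤ n) (ℓ : Fin n → ℝ)
include hp

lemma abs_bPlanar_sub_choose_le :
    |(bPlanar n p ℓ : ℝ) - (n - 1).choose p|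
      ≤ nonShortCount n (p + 1) ℓ + nonShortCount n (p + 2) ℓ := by
  have hn : 0 < n := by omega
  have h₁ := choose_le_aCount_add_nonShortCount hn p ℓ
  have h₂ := aCount_add_medCount_le_choose hn p ℓ
  have h₃ := aCount_add_medCount_le_nonShortCount hn (n - 3 - p) ℓ
  rw [show n - (n - 3 - p + 1) = p + 2 by omega] at h₃
  rw [abs_sub_le_iff, sub_le_iff_le_add, sub_le_iff_le_add]
  constructor <;> norm_cast <;> unfold bPlanar <;> omega

lemma abs_bPlanar_sub_choose_reflect_le :
    |(bPlanar n p ℓ : ℝ) - (n - 1).choose (n - 3 - p)|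
      ≤ nonShortCount n (n - 2 - p) ℓ + nonShortCount n (n - 1 - p) ℓ := by
  have hn : 0 < n := by omega
  have h₁ := choose_le_aCount_add_nonShortCount hn (n - 3 - p) ℓ
  have h₂ := aCount_add_medCount_le_choose hn (n - 3 - p) ℓ
  have h₃ := aCount_add_medCount_le_nonShortCount hn p ℓ
  rw [show n - 3 - p + 1 = n - 2 - p by omega] at h₁
  rw [show n - (p + 1) = n - 1 - p by omega] at h₃
  rw [abs_sub_le_iff, sub_le_iff_le_add, sub_le_iff_le_add]
  constructor <;> norm_cast <;> unfold bPlanar <;> omega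

end Counting

section Measurability

variable {n : ℕ}

lemma measurable_maxIdx (hn : 0 < n) : Measurable (maxIdx n) := by
  classical
  have hne := exists_forall_le_coord hn
  have hfind : maxIdx n = fun ℓ => Nat.find (hne ℓ) := funext fun ℓ => by
    convert Nat.sInf_def (s := {i : ℕ | ∃ h : i < n, ∀ j : Fin n, ℓ j ≤ ℓ ⟨i, h⟩}) (hne ℓ) <;> rfl
  rw [hfind]
  refine measurable_find hne fun k => ?_
  by_cases hk : k < n
  · simp only [hk, exists_true_left, Set.ofPred_forall]
    exact MeasurableSet.iInter fun j => measurableSet_le (measurable_pi_apply j)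
      (measurable_pi_apply _)
  · simp only [hk, IsEmpty.exists_iff, Set.ofPred_false, MeasurableSet.empty]

lemma measurable_sum_coord (J : Finset (Fin n)) : Measurable fun ℓ : Fin n → ℝ => ∑ j ∈ J, ℓ j :=
  Finset.measurable_sum _ fun j _ => measurable_pi_apply j

lemma measurableSet_sum_lt_sum (J K : Finset (Fin n)) :
    MeasurableSet {ℓ : Fin n → ℝ | ∑ j ∈ J, ℓ j < ∑ j ∈ K, ℓ j} :=
  measurableSet_lt (measurable_sum_coord J) (measurable_sum_coord K)

lemma measurableSet_sum_le_sum (J K : Finset (Fin n)) :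
    MeasurableSet {ℓ : Fin n → ℝ | ∑ j ∈ J, ℓ j ≤ ∑ j ∈ K, ℓ j} :=
  measurableSet_le (measurable_sum_coord J) (measurable_sum_coord K)

lemma measurableSet_sum_eq_sum (J K : Finset (Fin n)) :
    MeasurableSet {ℓ : Fin n → ℝ | ∑ j ∈ J, ℓ j = ∑ j ∈ K, ℓ j} :=
  measurableSet_eq_fun (measurable_sum_coord J) (measurable_sum_coord K)

end Measurability

section Expectation

lemma natCard_subtype_eq_sum_indicator {α β : Type*} [Fintype α] (P : α → β → Prop) (x : β) :
    (Nat.card {a // P a x} : ℝ) = ∑ a, {y | P a y}.indicator 1 x := by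
  classical
  rw [Nat.card_eq_fintype_card, Fintype.card_subtype, card_filter]
  push_cast
  exact sum_congr rfl fun a _ => by by_cases h : P a x <;> simp [h]

lemma abs_integral_sub_le_integral {β : Type*} [MeasurableSpace β] {ν : Measure β}
    [IsProbabilityMeasure ν] {f g : β → ℝ} {c : ℝ} (hf : Integrable f ν) (hg : Integrable g ν)
    (h : ∀ x, |f x - c| ≤ g x) :
    |∫ x, f x ∂ν - c| ≤ ∫ x, g x ∂ν :=
  calc |∫ x, f x ∂ν - c| = |∫ x, (f x - c) ∂ν| := by
        rw [integral_sub hf (integrable_const c), integral_const, probReal_univ, one_smul]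
    _ ≤ ∫ x, |f x - c| ∂ν := abs_integral_le_integral_abs
    _ ≤ ∫ x, g x ∂ν := integral_mono (hf.sub (integrable_const c)).abs hg h

variable {α β : Type*} [Fintype α] [MeasurableSpace β] {P : α → β → Prop}
  (hP : ∀ a, MeasurableSet {x | P a x}) (ν : Measure β) [IsFiniteMeasure ν]
include hP

lemma integrable_natCard_subtype : Integrable (fun x => (Nat.card {a // P a x} : ℝ)) ν := by
  simp_rw [natCard_subtype_eq_sum_indicator]
  exact integrable_finsetSum _ fun a _ => (integrable_const 1).indicator (hP a)

lemma integral_natCard_subtype :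
    ∫ x, (Nat.card {a // P a x} : ℝ) ∂ν = ∑ a, ν.real {x | P a x} := by
  simp_rw [natCard_subtype_eq_sum_indicator]
  rw [integral_finsetSum _ fun a _ => (integrable_const 1).indicator (hP a)]
  exact sum_congr rfl fun a _ => integral_indicator_one (hP a)

end Expectation

section BinomialSums

def binomTerm (n k : ℕ) (a b : ℝ) : ℝ := n.choose k * a ^ k * b ^ (n - k)

variable {n : ℕ} {a b : ℝ}

lemma binomTerm_symm {k : ℕ} (hk : k ≤ n) : binomTerm n (n - k) a b = binomTerm n k b a := by
  rw [binomTerm, binomTerm, Nat.choose_symm hk, Nat.sub_sub_self hk]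
  ring

variable (ha : 0 ≤ a) (hb : 0 ≤ b)
include ha hb

lemma sum_binomTerm_le (T : Finset ℕ) : ∑ k ∈ T, binomTerm n k a b ≤ (a + b) ^ n := by
  have hzero (k : ℕ) (_ : k ∈ range (n + 1) ∪ T) (hk : k ∉ range (n + 1)) :
      binomTerm n k a b = 0 := by
    simp [binomTerm, Nat.choose_eq_zero_of_lt (by simpa using hk : n < k)]
  calc ∑ k ∈ T, binomTerm n k a b ≤ ∑ k ∈ range (n + 1) ∪ T, binomTerm n k a b :=
        sum_le_sum_of_subset_of_nonneg subset_union_right fun k _ _ => by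
          unfold binomTerm; positivity
    _ = ∑ k ∈ range (n + 1), binomTerm n k a b := (sum_subset subset_union_left hzero).symm
    _ = (a + b) ^ n := by
        rw [add_pow]
        exact sum_congr rfl fun k _ => by unfold binomTerm; ring

lemma sum_binomTerm_add_mul_pow_le (m c : ℕ) {t : ℝ} (ht : 0 < t) :
    ∑ p ∈ range m, binomTerm n (p + c) a b * t ^ p ≤ (t * a + b) ^ n / t ^ c := by
  rw [le_div_iff₀ (pow_pos ht c), sum_mul]
  calc ∑ p ∈ range m, binomTerm n (p + c) a b * t ^ p * t ^ c
      = ∑ k ∈ (range m).image (· + c), binomTerm n k (t * a) b := by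
        rw [sum_image fun _ _ _ _ h => add_right_cancel h]
        exact sum_congr rfl fun p _ => by unfold binomTerm; ring
    _ ≤ (t * a + b) ^ n := sum_binomTerm_le (by positivity) hb _

lemma sum_binomTerm_succ_add_le (m : ℕ) {t : ℝ} (ht : 0 < t) :
    ∑ p ∈ range m, (binomTerm n (p + 1) a b + binomTerm n (p + 2) a b) * t ^ p
      ≤ (1 / t + 1 / t ^ 2) * (t * a + b) ^ n := by
  have h₁ := sum_binomTerm_add_mul_pow_le (n := n) ha hb m 1 ht
  have h₂ := sum_binomTerm_add_mul_pow_le (n := n) ha hb m 2 ht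
  rw [show (1 / t + 1 / t ^ 2) * (t * a + b) ^ n = (t * a + b) ^ n / t ^ 1
    + (t * a + b) ^ n / t ^ 2 by ring]
  simp only [add_mul, sum_add_distrib]
  exact add_le_add h₁ h₂

end BinomialSums

section Chernoff

open ProbabilityTheory Real

variable {μ : Measure ℝ} [IsProbabilityMeasure μ] {n : ℕ}

instance (n : ℕ) : IsProbabilityMeasure (pmeas μ n) := by
  unfold pmeas
  infer_instance

lemma measureReal_sum_compl_le_sum_le (J : Finset (Fin n)) {lam : ℝ} (hlam : 0 ≤ lam)
    (hpos : Integrable (fun x => exp (lam * x)) μ) (hneg : Integrable (fun x => exp (-lam * x)) μ) :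
    (pmeas μ n).real {ℓ | ∑ j ∈ Jᶜ, ℓ j ≤ ∑ j ∈ J, ℓ j}
      ≤ mgf id μ lam ^ #J * mgf id μ (-lam) ^ (n - #J) := by
  classical
  set s : Fin n → ℝ := fun i => if i ∈ J then lam else -lam
  have hprod (ℓ : Fin n → ℝ) :
      exp (lam * (∑ j ∈ J, ℓ j - ∑ j ∈ Jᶜ, ℓ j)) = ∏ i, exp (s i * ℓ i) := by
    rw [← exp_sum, ← sum_add_sum_compl J, mul_sub, mul_sum, mul_sum, sub_eq_add_neg,
      ← sum_neg_distrib]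
    congr 2 <;> refine sum_congr rfl fun i hi => ?_
    · simp [s, hi]
    · simp [s, mem_compl.1 hi]
  have hint (i : Fin n) : Integrable (fun x => exp (s i * x)) μ := by
    by_cases h : i ∈ J <;> simp only [s, h, if_true, if_false]
    exacts [hpos, hneg]
  calc (pmeas μ n).real {ℓ | ∑ j ∈ Jᶜ, ℓ j ≤ ∑ j ∈ J, ℓ j}
      = (pmeas μ n).real {ℓ | 0 ≤ ∑ j ∈ J, ℓ j - ∑ j ∈ Jᶜ, ℓ j} := by simp_rw [sub_nonneg]
    _ ≤ exp (-lam * 0) * mgf (fun ℓ => ∑ j ∈ J, ℓ j - ∑ j ∈ Jᶜ, ℓ j) (pmeas μ n) lam :=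
        measure_ge_le_exp_mul_mgf 0 hlam (by simp_rw [hprod]; exact Integrable.fintype_prod hint)
    _ = ∏ i, mgf id μ (s i) := by
        rw [mul_zero, exp_zero, one_mul, mgf]
        simp_rw [hprod]
        exact integral_fintype_prod_eq_prod (μ := fun _ => μ) fun i x => exp (s i * x)
    _ = mgf id μ lam ^ #J * mgf id μ (-lam) ^ (n - #J) := by
        simp [s, apply_ite (mgf id μ), prod_ite, filter_notMem_eq_sdiff, ← compl_eq_univ_sdiff,
          card_compl]

lemma measurableSet_nonShort (k : ℕ) (J : Finset (Fin n)) :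
    MeasurableSet {ℓ : Fin n → ℝ | #J = k ∧ ∑ j ∈ Jᶜ, ℓ j ≤ ∑ j ∈ J, ℓ j} := by
  rw [Set.ofPred_and]
  exact (MeasurableSet.const _).inter (measurableSet_sum_le_sum _ _)

lemma integrable_nonShortCount (k : ℕ) :
    Integrable (fun ℓ => (nonShortCount n k ℓ : ℝ)) (pmeas μ n) :=
  integrable_natCard_subtype (measurableSet_nonShort k) _

lemma integral_nonShortCount_le (k : ℕ) {lam : ℝ} (hlam : 0 ≤ lam)
    (hpos : Integrable (fun x => exp (lam * x)) μ) (hneg : Integrable (fun x => exp (-lam * x)) μ) :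
    ∫ ℓ, (nonShortCount n k ℓ : ℝ) ∂(pmeas μ n)
      ≤ binomTerm n k (mgf id μ lam) (mgf id μ (-lam)) := by
  classical
  unfold nonShortCount
  rw [integral_natCard_subtype (measurableSet_nonShort k)]
  calc ∑ J, (pmeas μ n).real {ℓ | #J = k ∧ ∑ j ∈ Jᶜ, ℓ j ≤ ∑ j ∈ J, ℓ j}
      ≤ ∑ J : Finset (Fin n), if #J = k then mgf id μ lam ^ k * mgf id μ (-lam) ^ (n - k)
          else 0 := by
        refine sum_le_sum fun J _ => ?_
        by_cases hJ : #J = k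
        · simpa only [hJ, true_and, if_true] using measureReal_sum_compl_le_sum_le J hlam hpos hneg
        · simp [hJ]
    _ = binomTerm n k (mgf id μ lam) (mgf id μ (-lam)) := by
        rw [← sum_filter, sum_const, ← powerset_univ, ← powersetCard_eq_filter,
          card_powersetCard, card_univ, Fintype.card_fin, nsmul_eq_mul, binomTerm, mul_assoc]

lemma integrable_bPlanar {p : ℕ} (hn : 0 < n) :
    Integrable (fun ℓ => (bPlanar n p ℓ : ℝ)) (pmeas μ n) := by
  have hmax (J : Finset (Fin n)) :
      MeasurableSet {ℓ : Fin n → ℝ | ∃ i ∈ J, (i : ℕ) = maxIdx n ℓ} :=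
    measurable_maxIdx hn (MeasurableSet.of_discrete (s := {k | ∃ i ∈ J, (i : ℕ) = k}))
  have ha (q : ℕ) : Integrable (fun ℓ => (aCount n q ℓ : ℝ)) (pmeas μ n) :=
    integrable_natCard_subtype (fun J => by
      simp only [Set.ofPred_and]
      exact (MeasurableSet.const _).inter ((hmax J).inter (measurableSet_sum_lt_sum _ _))) _
  have hm : Integrable (fun ℓ => (medCount n p ℓ : ℝ)) (pmeas μ n) :=
    integrable_natCard_subtype (fun J => by
      simp only [Set.ofPred_and]
      exact (MeasurableSet.const _).inter ((hmax J).inter (measurableSet_sum_eq_sum _ _))) _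
  simp only [bPlanar, Nat.cast_add]
  exact ((ha p).add hm).add (ha (n - 3 - p))

lemma abs_integral_poincareM_sub_le (c k₁ k₂ : ℕ → ℕ) {t : ℝ} (ht : 0 ≤ t) {lam : ℝ}
    (hlam : 0 ≤ lam) (hpos : Integrable (fun x => exp (lam * x)) μ)
    (hneg : Integrable (fun x => exp (-lam * x)) μ)
    (hb : ∀ p < n - 2, ∀ ℓ, |(bPlanar n p ℓ : ℝ) - c p|
      ≤ nonShortCount n (k₁ p) ℓ + nonShortCount n (k₂ p) ℓ) :
    |∫ ℓ, poincareM n t ℓ ∂(pmeas μ n) - ∑ p ∈ range (n - 2), (c p : ℝ) * t ^ p|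
      ≤ ∑ p ∈ range (n - 2), (binomTerm n (k₁ p) (mgf id μ lam) (mgf id μ (-lam))
          + binomTerm n (k₂ p) (mgf id μ lam) (mgf id μ (-lam))) * t ^ p := by
  unfold poincareM
  rw [integral_finsetSum _ fun p hp => (integrable_bPlanar (by grind)).mul_const _,
    ← sum_sub_distrib]
  refine (abs_sum_le_sum_abs _ _).trans (sum_le_sum fun p hp => ?_)
  rw [integral_mul_const, ← sub_mul, abs_mul, abs_of_nonneg (pow_nonneg ht p)]
  refine mul_le_mul_of_nonneg_right ?_ (pow_nonneg ht p)
  calc |∫ ℓ, (bPlanar n p ℓ : ℝ) ∂(pmeas μ n) - c p|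
      ≤ ∫ ℓ, ((nonShortCount n (k₁ p) ℓ : ℝ) + nonShortCount n (k₂ p) ℓ) ∂(pmeas μ n) :=
        abs_integral_sub_le_integral (integrable_bPlanar (by grind))
          ((integrable_nonShortCount _).add (integrable_nonShortCount _)) (hb p (mem_range.1 hp))
    _ ≤ _ := by
        rw [integral_add (integrable_nonShortCount _) (integrable_nonShortCount _)]
        exact add_le_add (integral_nonShortCount_le _ hlam hpos hneg)
          (integral_nonShortCount_le _ hlam hpos hneg)

end Chernoff

section ErrorBounds

open ProbabilityTheory Real

variable {μ : Measure ℝ} [IsProbabilityMeasure μ] {n : ℕ} {t lam : ℝ} (ht : 0 < t)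
  (hlam : 0 ≤ lam) (hpos : Integrable (fun x => exp (lam * x)) μ)
  (hneg : Integrable (fun x => exp (-lam * x)) μ)
include ht hlam hpos hneg

lemma abs_integral_poincareM_sub_sum_choose_le :
    |∫ ℓ, poincareM n t ℓ ∂(pmeas μ n) - ∑ p ∈ range (n - 2), ((n - 1).choose p : ℝ) * t ^ p|
      ≤ (1 / t + 1 / t ^ 2) * (t * mgf id μ lam + mgf id μ (-lam)) ^ n :=
  (abs_integral_poincareM_sub_le (fun p => (n - 1).choose p) (· + 1) (· + 2) ht.le hlam hpos
    hneg fun _ hp ℓ => abs_bPlanar_sub_choose_le (by omega) ℓ).trans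
    (sum_binomTerm_succ_add_le mgf_nonneg mgf_nonneg _ ht)

lemma abs_integral_poincareM_sub_sum_choose_reflect_le :
    |∫ ℓ, poincareM n t ℓ ∂(pmeas μ n)
        - ∑ p ∈ range (n - 2), ((n - 1).choose (n - 3 - p) : ℝ) * t ^ p|
      ≤ (1 / t + 1 / t ^ 2) * (t * mgf id μ (-lam) + mgf id μ lam) ^ n := by
  refine (abs_integral_poincareM_sub_le (fun p => (n - 1).choose (n - 3 - p)) (n - 2 - ·)
    (n - 1 - ·) ht.le hlam hpos hneg fun _ hp ℓ => abs_bPlanar_sub_choose_reflect_le (by omega)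
    ℓ).trans (le_of_eq_of_le (sum_congr rfl fun p hp => ?_)
    (sum_binomTerm_succ_add_le mgf_nonneg mgf_nonneg _ ht))
  have hp : p + 2 ≤ n := by grind
  rw [show n - 2 - p = n - (p + 2) by omega, show n - 1 - p = n - (p + 1) by omega,
    binomTerm_symm hp, binomTerm_symm (by omega), add_comm]

end ErrorBounds

section Limits

lemma sum_range_choose_mul_pow (m : ℕ) (s : ℝ) :
    ∑ p ∈ range m, ((m + 1).choose p : ℝ) * s ^ p
      = (1 + s) ^ (m + 1) - (m + 1) * s ^ m - s ^ (m + 1) := by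
  rw [add_comm 1 s, add_pow, sum_range_succ, sum_range_succ, Nat.choose_self,
    Nat.choose_succ_self_right]
  simp only [one_pow, mul_one, sum_congr rfl fun x _ => mul_comm (s ^ x) _]
  push_cast
  ring

lemma tendsto_sum_choose_mul_pow_div {s : ℝ} (hs : 0 < s) :
    Tendsto (fun n => (∑ p ∈ range (n - 2), ((n - 1).choose p : ℝ) * s ^ p) / (1 + s) ^ (n - 1))
      atTop (nhds 1) := by
  rw [← tendsto_add_atTop_iff_nat 2]
  set r := s / (1 + s)
  have hr₀ : 0 ≤ r := by positivity
  have hr₁ : r < 1 := (div_lt_one (by positivity)).2 (by linarith)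
  have hclosed (m : ℕ) : (∑ p ∈ range (m + 2 - 2), ((m + 2 - 1).choose p : ℝ) * s ^ p)
      / (1 + s) ^ (m + 2 - 1) = 1 - ((m * r ^ m + r ^ m) / (1 + s) + r ^ (m + 1)) := by
    rw [show m + 2 - 2 = m by omega, show m + 2 - 1 = m + 1 by omega,
      sum_range_choose_mul_pow, div_pow, div_pow]
    field_simp
    ring
  simp_rw [hclosed]
  have herr := (((tendsto_self_mul_const_pow_of_lt_one hr₀ hr₁).add
    (tendsto_pow_atTop_nhds_zero_of_lt_one hr₀ hr₁)).div_const (1 + s)).add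
    ((tendsto_pow_atTop_nhds_zero_of_lt_one hr₀ hr₁).comp (tendsto_add_atTop_nat 1))
  simpa using (tendsto_const_nhds (x := (1 : ℝ))).sub herr

lemma sum_choose_reflect_mul_pow_div {t : ℝ} (ht : 0 < t) {n : ℕ} (hn : 3 ≤ n) :
    (∑ p ∈ range (n - 2), ((n - 1).choose (n - 3 - p) : ℝ) * t ^ p) / (1 + t) ^ (n - 1)
      = (∑ p ∈ range (n - 2), ((n - 1).choose p : ℝ) * t⁻¹ ^ p) / (1 + t⁻¹) ^ (n - 1)
          / t ^ 2 := by
  rw [← sum_range_reflect]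
  have hterm (p : ℕ) (hp : p ∈ range (n - 2)) :
      ((n - 1).choose (n - 3 - (n - 2 - 1 - p)) : ℝ) * t ^ (n - 2 - 1 - p)
        = t ^ (n - 3) * (((n - 1).choose p : ℝ) * t⁻¹ ^ p) := by
    have hp := mem_range.1 hp
    rw [show n - 3 - (n - 2 - 1 - p) = p by omega, show n - 2 - 1 - p = n - 3 - p by omega,
      show t ^ (n - 3) = t ^ (n - 3 - p) * t ^ p by rw [← pow_add]; congr 1; omega, inv_pow]
    field_simp
  have hpow : (1 + t) ^ (n - 1) = t ^ (n - 3) * t ^ 2 * (1 + t⁻¹) ^ (n - 1) := by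
    rw [← pow_add, show n - 3 + 2 = n - 1 by omega, ← mul_pow]
    field_simp
    ring
  rw [sum_congr rfl hterm, ← mul_sum, hpow]
  field_simp

lemma tendsto_sum_choose_reflect_mul_pow_div {t : ℝ} (ht : 0 < t) :
    Tendsto (fun n => (∑ p ∈ range (n - 2), ((n - 1).choose (n - 3 - p) : ℝ) * t ^ p)
      / (1 + t) ^ (n - 1)) atTop (nhds (1 / t ^ 2)) := by
  refine Tendsto.congr'
    (eventually_atTop.2 ⟨3, fun n hn => (sum_choose_reflect_mul_pow_div ht hn).symm⟩) ?_
  simpa using (tendsto_sum_choose_mul_pow_div (inv_pos.2 ht)).div_const (t ^ 2)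

lemma tendsto_div_pow_of_abs_sub_le {S M : ℕ → ℝ} {D r K L : ℝ} (hD : 0 < D) (hr : 0 ≤ r)
    (hrD : r < D) (hM : Tendsto (fun n => M n / D ^ (n - 1)) atTop (nhds L))
    (hSM : ∀ n, |S n - M n| ≤ K * r ^ n) :
    Tendsto (fun n => S n / D ^ (n - 1)) atTop (nhds L) := by
  have herr : Tendsto (fun n => (S n - M n) / D ^ (n - 1)) atTop (nhds 0) := by
    have hgeom := (tendsto_pow_atTop_nhds_zero_of_lt_one (div_nonneg hr hD.le)
      ((div_lt_one hD).2 hrD)).const_mul (K * D)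
    rw [mul_zero] at hgeom
    refine squeeze_zero_norm' ?_ hgeom
    filter_upwards [eventually_ge_atTop 1] with n hn
    have hDn : D ^ n = D * D ^ (n - 1) := by rw [← pow_succ', Nat.sub_add_cancel hn]
    rw [norm_div, Real.norm_eq_abs, Real.norm_eq_abs, abs_of_pos (pow_pos hD _),
      div_le_iff₀ (pow_pos hD _), div_pow, hDn]
    calc |S n - M n| ≤ K * r ^ n := hSM n
      _ = K * D * (r ^ n / (D * D ^ (n - 1))) * D ^ (n - 1) := by field_simp
  have h := hM.add herr
  rw [add_zero] at h
  exact h.congr fun n => by ring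

end Limits

section Asymptotics

open ProbabilityTheory Real

variable {μ : Measure ℝ} [IsProbabilityMeasure μ] (hsupp : μ (Set.Ioi (0 : ℝ))ᶜ = 0)
  (hexp : ∃ η > 0, Integrable (fun x => exp (η * x)) μ)
include hsupp hexp

lemma exists_mul_mgf_add_mul_mgf_neg_lt {a b : ℝ} (hab : a < b) :
    ∃ lam, 0 ≤ lam ∧ Integrable (fun x => exp (lam * x)) μ ∧
      Integrable (fun x => exp (-lam * x)) μ ∧ a * mgf id μ lam + b * mgf id μ (-lam) < a + b := by
  obtain ⟨η, hη, hint⟩ := hexp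
  have hae : ∀ᵐ x ∂μ, 0 < x := hsupp
  have hint_neg_one : Integrable (fun x => exp (-1 * x)) μ :=
    (integrable_const 1).mono' (by fun_prop) (hae.mono fun x hx => by
      rw [norm_of_nonneg (exp_nonneg _), exp_le_one_iff]
      linarith)
  have hmem {s : ℝ} (hs : s ∈ Set.Icc (-1) η) : s ∈ integrableExpSet id μ :=
    integrable_exp_mul_of_le_of_le hint_neg_one hint hs.1 hs.2
  have h0 : (0 : ℝ) ∈ interior (integrableExpSet id μ) :=
    mem_interior_iff_mem_nhds.2 (mem_of_superset (Icc_mem_nhds (by norm_num) hη) fun s => hmem)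
  have hmean : 0 < ∫ x, x ∂μ := by
    refine (integral_nonneg_of_ae (hae.mono fun x hx => hx.le)).lt_of_ne fun h => ?_
    have hzero := (integral_eq_zero_iff_of_nonneg_ae (hae.mono fun x hx => hx.le)
      (integrable_of_mem_interior_integrableExpSet h0)).1 h.symm
    obtain ⟨x, hx, hx0⟩ := (hae.and hzero).exists
    exact hx.ne' hx0
  have hderiv : HasDerivAt (fun s => a * mgf id μ s + b * mgf id μ (-s))
      ((a - b) * ∫ x, x ∂μ) 0 := by
    refine (((hasDerivAt_mgf h0).const_mul a).add (((hasDerivAt_mgf (by rwa [neg_zero])).comp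
      (0 : ℝ) (hasDerivAt_neg (0 : ℝ))).const_mul b)).congr_deriv ?_
    simp
    ring
  obtain ⟨s, hslope, hs⟩ := (((hderiv.hasDerivWithinAt (s := Set.Ioi 0)).limsup_slope_le'
    (lt_irrefl 0) (mul_neg_of_neg_of_pos (by linarith) hmean)).and
    (Ioo_mem_nhdsGT (lt_min hη one_pos))).exists
  rw [slope_def_field, sub_zero, div_lt_iff₀ hs.1, zero_mul, sub_neg, neg_zero, mgf_zero,
    mul_one, mul_one] at hslope
  exact ⟨s, hs.1.le, hmem ⟨by linarith [hs.1], (hs.2.trans_le (min_le_left _ _)).le⟩,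
    hmem ⟨by linarith [hs.2.trans_le (min_le_right _ _)], by linarith [hs.1]⟩, hslope⟩

variable {t : ℝ} (ht : 0 < t)
include ht

lemma tendsto_integral_poincareM_div_of_lt_one (ht1 : t < 1) :
    Tendsto (fun n => (∫ ℓ, poincareM n t ℓ ∂(pmeas μ n)) / (1 + t) ^ (n - 1)) atTop (nhds 1) := by
  obtain ⟨lam, hlam, hpos, hneg, hlt⟩ := exists_mul_mgf_add_mul_mgf_neg_lt hsupp hexp ht1
  exact tendsto_div_pow_of_abs_sub_le (by positivity)
    (add_nonneg (mul_nonneg ht.le mgf_nonneg) mgf_nonneg) (by linarith)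
    (tendsto_sum_choose_mul_pow_div ht)
    fun _ => abs_integral_poincareM_sub_sum_choose_le ht hlam hpos hneg

lemma tendsto_integral_poincareM_div_of_one_lt (ht1 : 1 < t) :
    Tendsto (fun n => (∫ ℓ, poincareM n t ℓ ∂(pmeas μ n)) / (1 + t) ^ (n - 1)) atTop
      (nhds (1 / t ^ 2)) := by
  obtain ⟨lam, hlam, hpos, hneg, hlt⟩ := exists_mul_mgf_add_mul_mgf_neg_lt hsupp hexp ht1
  exact tendsto_div_pow_of_abs_sub_le (by positivity)
    (add_nonneg (mul_nonneg ht.le mgf_nonneg) mgf_nonneg) (by linarith)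
    (tendsto_sum_choose_reflect_mul_pow_div ht)
    fun _ => abs_integral_poincareM_sub_sum_choose_reflect_le ht hlam hpos hneg

end Asymptotics

theorem stmt7_general (μ : MeasureTheory.Measure ℝ) [IsProbabilityMeasure μ]
    (hsupp : μ (Set.Ioi (0 : ℝ))ᶜ = 0)
    (hexp : ∃ η > 0, Integrable (fun x => Real.exp (η * x)) μ)
    (t : ℝ) (ht : 0 < t) (ht1 : t ≠ 1) :
    Tendsto (fun n => (∫ ℓ, poincareM n t ℓ ∂(pmeas μ n)) / (1 + t) ^ (n - 1))
      atTop (nhds (min 1 (1 / t ^ 2))) := by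
  rcases ht1.lt_or_gt with ht1 | ht1
  · rw [min_eq_left (by rw [le_div_iff₀ (by positivity)]; nlinarith)]
    exact tendsto_integral_poincareM_div_of_lt_one hsupp hexp ht ht1
  · rw [min_eq_right (by rw [div_le_one (by positivity)]; nlinarith)]
    exact tendsto_integral_poincareM_div_of_one_lt hsupp hexp ht ht1

/-- For every `t > 0`, `t ≠ 1`,
`μ_n[p_{M_ℓ}(t)] / (1+t)^{n-1} → min(1, t⁻²)`. -/
theorem stmt7 (μ : MeasureTheory.Measure ℝ) [IsProbabilityMeasure μ] [NullSingletonClass μ]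
    (hsupp : μ (Set.Ioi (0 : ℝ))ᶜ = 0)
    (hexp : ∃ η > 0, Integrable (fun x => Real.exp (η * x)) μ)
    (t : ℝ) (ht : 0 < t) (ht1 : t ≠ 1) :
    Tendsto (fun n => (∫ ℓ, poincareM n t ℓ ∂(pmeas μ n)) / (1 + t) ^ (n - 1))
      atTop (nhds (min 1 (1 / t ^ 2))) :=
  stmt7_general μ hsupp hexp t ht ht1
end
end

section
/- For every n ≥ 1, every ℓ ∈ (0,∞)^n, and every 0 ≤ p ≤ n−1, the number of short subsets satisfies p! (n−1−p)! · a_p(ℓ) = #{ σ ∈ Σ_{n−1} : τ_σ(ℓ̃) > p }, where Σ_{n−1} is the group of permutations of {1,…,n−1}; equivalently, a_p(ℓ) = C(n−1,p) · (the proportion of permutations σ ∈ Σ_{n−1} with τ_σ(ℓ̃) > p). -/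
open MeasureTheory Filter Finset

noncomputable section

/-!
Move the maximal coordinate to the end: for `m = ℓ̃ = ℓ ∘ (i₀ n)`, a set `J ∋ i₀` is short for
`ℓ` iff its image under the transposition `(i₀ n)` is short for `m`, so `a_p(ℓ)` counts the
`p`-subsets `T ⊆ {1, …, n-1}` with `T ∪ {n}` short for `m`. The partial sum at time `t` in the
definition of `τ_σ(m)` is negative exactly when `σ{1, …, t} ∪ {n}` is short; since shortness passes
to subsets (the weights are nonnegative), `τ_σ(m) > p` iff `σ{1, …, p} ∪ {n}` is short. Finally,
each `p`-subset `T` equals `σ{1, …, p}` for exactly `p! (n-1-p)!` permutations `σ`.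
-/

open Equiv Nat

section Short

variable {α : Type*} [Fintype α] [DecidableEq α]

def IsShort (w : α → ℝ) (J : Finset α) : Prop :=
  ∑ j ∈ J, w j < ∑ j ∈ Jᶜ, w j

instance (w : α → ℝ) : DecidablePred (IsShort w) := fun _ => Real.decidableLT _ _

lemma isShort_iff_sum_ite_neg (w : α → ℝ) (J : Finset α) :
    IsShort w J ↔ ∑ j, (if j ∈ J then w j else -w j) < 0 := by
  rw [IsShort, sum_ite, ← compl_filter, filter_univ_mem, sum_neg_distrib, ← sub_eq_add_neg,
    sub_neg]

lemma IsShort.mono {w : α → ℝ} (hw : ∀ i, 0 ≤ w i) {J K : Finset α} (hJK : J ⊆ K)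
    (hK : IsShort w K) : IsShort w J :=
  (sum_le_sum_of_subset_of_nonneg hJK fun i _ _ => hw i).trans_lt <| hK.trans_le <|
    sum_le_sum_of_subset_of_nonneg (compl_subset_compl.mpr hJK) fun i _ _ => hw i

lemma not_isShort_univ {w : α → ℝ} (hw : ∀ i, 0 ≤ w i) : ¬IsShort w univ := by
  simpa [IsShort] using sum_nonneg fun i _ => hw i

lemma isShort_comp_perm_iff (w : α → ℝ) (e : Perm α) (J : Finset α) :
    IsShort (w ∘ e) J ↔ IsShort w (J.map e.toEmbedding) := by
  simp only [isShort_iff_sum_ite_neg, mem_map_equiv]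
  rw [← e.symm.sum_comp]
  simp

end Short

lemma map_perm_eq_self_iff {α : Type*} (A : Finset α) (σ : Perm α) :
    A.map σ.toEmbedding = A ↔ ∀ a, σ a ∈ A ↔ a ∈ A := by
  refine ⟨fun h a => ?_, fun h => ext fun b => ?_⟩
  · conv_lhs => rw [← h]
    simp
  · simpa [mem_map_equiv] using (h (σ.symm b)).symm

section PermutationCount

variable {α : Type*} [Fintype α]

lemma card_filter_map_perm (e : Perm α) (Q : Finset α → Prop) [DecidablePred Q] :
    #{J : Finset α | Q (J.map e.toEmbedding)} = #{J | Q J} :=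
  card_equiv e.finsetCongr (by simp)

variable [DecidableEq α]

lemma exists_perm_map_eq {A T : Finset α} (h : #A = #T) :
    ∃ τ : Perm α, A.map τ.toEmbedding = T := by
  refine ⟨(A.equivOfCardEq h).extendSubtype, eq_of_subset_of_card_le ?_ (by simp [h])⟩
  intro x hx
  obtain ⟨a, ha, rfl⟩ := mem_map.mp hx
  exact extendSubtype_mem _ a ha

lemma card_perm_map_eq_self (A : Finset α) :
    #{σ : Perm α | A.map σ.toEmbedding = A} = (#A)! * (Fintype.card α - #A)! := by
  classical
  have key := DomMulAct.stabilizer_card (fun a => a ∈ A)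
  rw [Fintype.prod_Prop] at key
  simp only [eq_iff_iff, iff_true, iff_false] at key
  rw [Fintype.card_subtype_compl, Fintype.card_coe] at key
  rw [← key, ← Fintype.card_subtype]
  exact Fintype.card_congr <| subtypeEquivRight fun σ => by
    simp [map_perm_eq_self_iff, funext_iff]

lemma card_perm_map_eq {A T : Finset α} (h : #A = #T) :
    #{σ : Perm α | A.map σ.toEmbedding = T} = (#A)! * (Fintype.card α - #A)! := by
  obtain ⟨τ, hτ⟩ := exists_perm_map_eq h
  rw [← card_perm_map_eq_self]
  refine card_equiv (Equiv.mulLeft τ⁻¹) fun σ => ?_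
  simp only [mem_filter, mem_univ, true_and, coe_mulLeft]
  rw [← hτ, Perm.mul_def, trans_toEmbedding, ← Finset.map_map, Perm.inv_def]
  exact τ.finsetCongr.symm_apply_eq.symm

lemma card_filter_perm_map (A : Finset α) (P : Finset α → Prop) [DecidablePred P] :
    #{σ : Perm α | P (A.map σ.toEmbedding)} =
      (#A)! * (Fintype.card α - #A)! * #{T : Finset α | #T = #A ∧ P T} := by
  rw [card_eq_sum_card_fiberwise (f := fun σ : Perm α => A.map σ.toEmbedding)
    (t := {T : Finset α | #T = #A ∧ P T})
    fun σ hσ => mem_filter.mpr ⟨mem_univ _, card_map _, (mem_filter.mp hσ).2⟩]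
  rw [sum_congr rfl fun T hT => ?_, sum_const, smul_eq_mul, mul_comm]
  rw [mem_filter] at hT
  rw [filter_filter, ← card_perm_map_eq hT.2.1.symm]
  congr 1
  exact filter_congr fun σ _ => ⟨And.right, fun h => ⟨by simp only [h]; exact hT.2.2, h⟩⟩

end PermutationCount

lemma Nat.lt_sInf_iff_notMem {s : Set ℕ} (hs : IsUpperSet s) (hne : s.Nonempty) {p : ℕ} :
    p < sInf s ↔ p ∉ s :=
  ⟨Nat.notMem_of_lt_sInf, fun h => lt_of_not_ge fun hle => h (hs hle (Nat.sInf_mem hne))⟩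

section LastCoordinate

variable {k : ℕ}

def withLast (T : Finset (Fin k)) : Finset (Fin (k + 1)) :=
  (T.map Fin.castSuccEmb).cons (Fin.last k) (by simp)

@[simp]
lemma last_mem_withLast (T : Finset (Fin k)) : Fin.last k ∈ withLast T := by
  simp [withLast]

@[simp]
lemma castSucc_mem_withLast {T : Finset (Fin k)} {i : Fin k} :
    i.castSucc ∈ withLast T ↔ i ∈ T := by
  simp [withLast, Fin.castSucc_ne_last]

@[simp]
lemma card_withLast (T : Finset (Fin k)) : #(withLast T) = #T + 1 := by
  simp [withLast]

lemma withLast_mono : Monotone (withLast (k := k)) := fun S T h j => by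
  induction j using Fin.lastCases with
  | last => simp
  | cast i => simpa using @h i

@[simp]
lemma withLast_univ : withLast (univ : Finset (Fin k)) = univ := by
  ext j; induction j using Fin.lastCases <;> simp

lemma withLast_filter_castSucc_mem {J : Finset (Fin (k + 1))} (hJ : Fin.last k ∈ J) :
    withLast {i : Fin k | i.castSucc ∈ J} = J := by
  ext j; induction j using Fin.lastCases <;> simp [hJ]

lemma card_filter_last_mem (Q : Finset (Fin (k + 1)) → Prop) [DecidablePred Q] :
    #{J | Fin.last k ∈ J ∧ Q J} = #{T : Finset (Fin k) | Q (withLast T)} := by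
  refine card_nbij' (fun J => ({i | i.castSucc ∈ J} : Finset (Fin k))) withLast
    ?_ ?_ ?_ ?_
  · intro J hJ
    simp_all [withLast_filter_castSucc_mem]
  · intro T hT
    simp_all
  · intro J hJ
    simp_all [withLast_filter_castSucc_mem]
  · intro T _
    ext i; simp

lemma sum_ite_mem_withLast (w : Fin (k + 1) → ℝ) (T : Finset (Fin k)) :
    ∑ j, (if j ∈ withLast T then w j else -w j) =
      w (Fin.last k) + ∑ i : Fin k, (if i ∈ T then w i.castSucc else -w i.castSucc) := by
  simp [Fin.sum_univ_castSucc, add_comm]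

lemma coord_last (w : Fin (k + 1) → ℝ) : coord (k + 1) w k = w (Fin.last k) := by
  simp [coord, Fin.last]

lemma coord_castSucc (w : Fin (k + 1) → ℝ) (i : Fin k) : coord (k + 1) w i = w i.castSucc := by
  simp [coord, Fin.castSucc, Fin.castAdd, Fin.castLE]

def initialSegment (k t : ℕ) : Finset (Fin k) := {i | (i : ℕ) < t}

lemma initialSegment_mono : Monotone (initialSegment k) := fun s t h i => by
  simp only [initialSegment, mem_filter, mem_univ, true_and]; omega

lemma card_initialSegment {t : ℕ} (ht : t ≤ k) : #(initialSegment k t) = t := by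
  simp [initialSegment, Fin.card_filter_val_lt, ht]

lemma initialSegment_self : initialSegment k k = univ := by
  ext i; simp [initialSegment]

lemma lt_tauPerm_iff {w : Fin (k + 1) → ℝ} (hw : ∀ i, 0 ≤ w i) (σ : Perm (Fin k)) (p : ℕ) :
    p < tauPerm (k + 1) σ w ↔
      IsShort w (withLast ((initialSegment k p).map σ.toEmbedding)) := by
  set J : ℕ → Finset (Fin (k + 1)) := fun t =>
    withLast ((initialSegment k t).map σ.toEmbedding)
  set S : Set ℕ := {t | 0 ≤ coord (k + 1) w k + ∑ i : Fin k,
    (if (i : ℕ) < t then coord (k + 1) w (σ i) else -coord (k + 1) w (σ i))}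
  have hS : ∀ t, t ∈ S ↔ ¬IsShort w (J t) := by
    intro t
    rw [isShort_iff_sum_ite_neg, sum_ite_mem_withLast, not_lt]
    conv_rhs => rw [← Equiv.sum_comp σ]
    simp [S, coord_last, coord_castSucc, initialSegment]
  have hJ : Monotone J := fun s t hst =>
    withLast_mono (map_subset_map.mpr (initialSegment_mono hst))
  change p < sInf S ↔ _
  rw [Nat.lt_sInf_iff_notMem, hS, not_not]
  · exact fun s t hst hs => (hS t).2 fun ht => (hS s).1 hs (ht.mono hw (hJ hst))
  · exact ⟨k, (hS k).2 (by simpa [J, initialSegment_self] using not_isShort_univ hw)⟩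

end LastCoordinate

section MaximalCoordinate

variable {k : ℕ}

lemma maxIdx_lt_s15 (ℓ : Fin (k + 1) → ℝ) : maxIdx (k + 1) ℓ < k + 1 := by
  obtain ⟨i, hi⟩ := Finite.exists_max ℓ
  exact (Nat.sInf_mem (s := {i | ∃ h : i < k + 1, ∀ j, ℓ j ≤ ℓ ⟨i, h⟩})
    ⟨i, i.2, hi⟩).1

def maxIndex (ℓ : Fin (k + 1) → ℝ) : Fin (k + 1) := ⟨maxIdx (k + 1) ℓ, maxIdx_lt_s15 ℓ⟩

lemma val_eq_maxIdx_iff {ℓ : Fin (k + 1) → ℝ} {i : Fin (k + 1)} :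
    (i : ℕ) = maxIdx (k + 1) ℓ ↔ i = maxIndex ℓ := by
  rw [Fin.ext_iff]; rfl

lemma tildeVec_eq_comp_swap (ℓ : Fin (k + 1) → ℝ) :
    tildeVec (k + 1) ℓ = ℓ ∘ swap (maxIndex ℓ) (Fin.last k) := by
  funext j
  by_cases h₀ : j = maxIndex ℓ
  · subst h₀
    simp [tildeVec, maxIndex, coord, Fin.last]
  by_cases hlast : j = Fin.last k
  · subst hlast
    simp only [Fin.ext_iff, maxIndex, Fin.val_last] at h₀
    simp [tildeVec, maxIndex, coord, Fin.last, h₀, maxIdx_lt_s15 ℓ]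
  rw [Function.comp_apply, swap_apply_of_ne_of_ne h₀ hlast]
  simp only [Fin.ext_iff, maxIndex, Fin.val_last] at h₀ hlast
  simp [tildeVec, h₀, hlast]

lemma aCount_eq_card_withLast (ℓ : Fin (k + 1) → ℝ) (p : ℕ) :
    aCount (k + 1) p ℓ =
      #{T : Finset (Fin k) | #T = p ∧ IsShort (tildeVec (k + 1) ℓ) (withLast T)} := by
  set e := swap (maxIndex ℓ) (Fin.last k)
  have hcard (T : Finset (Fin k)) : #T = p ↔ #(withLast T) = p + 1 := by simp
  rw [aCount, Nat.card_eq_fintype_card, Fintype.card_subtype, tildeVec_eq_comp_swap,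
    filter_congr fun T _ => and_congr_left' (hcard T),
    ← card_filter_last_mem fun J => #J = p + 1 ∧ IsShort (ℓ ∘ e) J, ← card_filter_map_perm e]
  congr 1
  refine filter_congr fun J _ => ?_
  rw [← IsShort, ← isShort_comp_perm_iff, card_map]
  simp only [mem_map_equiv, val_eq_maxIdx_iff, exists_eq_right, e, symm_swap, swap_apply_left]
  exact and_left_comm

end MaximalCoordinate

/-- For every `n ≥ 1`, `ℓ ∈ (0,∞)ⁿ` and `0 ≤ p ≤ n-1`,
`p! (n-1-p)! a_p(ℓ) = #{σ ∈ Σ_{n-1} : τ_σ(ℓ̃) > p}`. -/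
theorem stmt15 (n : ℕ) (hn : 1 ≤ n) (ℓ : Fin n → ℝ) (hℓ : ∀ i, 0 < ℓ i)
    (p : ℕ) (hp : p ≤ n - 1) :
    Nat.factorial p * Nat.factorial (n - 1 - p) * aCount n p ℓ =
      Nat.card {σ : Equiv.Perm (Fin (n - 1)) // p < tauPerm n σ (tildeVec n ℓ)} := by
  obtain ⟨k, rfl⟩ := Nat.exists_eq_add_of_le' hn
  change p ≤ k at hp
  change p ! * (k - p)! * aCount (k + 1) p ℓ =
    Nat.card {σ : Perm (Fin k) // p < tauPerm (k + 1) σ (tildeVec (k + 1) ℓ)}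
  have hw : ∀ i, 0 ≤ tildeVec (k + 1) ℓ i := by
    rw [tildeVec_eq_comp_swap]; exact fun i => (hℓ _).le
  rw [Nat.card_eq_fintype_card, Fintype.card_subtype]
  simp only [lt_tauPerm_iff hw]
  rw [card_filter_perm_map _ fun T => IsShort (tildeVec (k + 1) ℓ) (withLast T),
    card_initialSegment hp, aCount_eq_card_withLast, Fintype.card_fin]
end
end
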